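/- arXiv:2604.06140 — 5 statements merged into one kernel-verified Lean document; each statement's English description precedes it below -/
import Mathlib

section
/- If φ ∈ (0,1) and every agent has at least one neighbor (|N_i| > 0 for all i), then the directed graph induced by the state matrix P of the opinion–action coevolution model is strongly connected. -/
/-- The state matrix `P` of the opinion–action coevolution model, indexed by
`Fin n ⊕ Fin n` (left: opinion nodes, right: action nodes). -/
noncomputable def stateP (n : ℕ) (φ : ℝ) (N : Fin n → Finset (Fin n)) :
    (Fin n ⊕ Fin n) → (Fin n ⊕ Fin n) → ℝ
  | .inl i, .inl j =>
      if j = i then 1 / ((N i).card + 1)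
      else if j ∈ N i then φ / ((N i).card + 1) else 0
  | .inl i, .inr _ => (1 - φ) * (N i).card / (((N i).card + 1) * n)
  | .inr i, .inl j => if j = i then φ else 0
  | .inr _, .inr _ => (1 - φ) / n

/-- If `φ ∈ (0,1)` and every agent has at least one neighbor, then the digraph
induced by `P` is strongly connected. -/
theorem stateP_strongly_connected (n : ℕ) (hn : 1 ≤ n) (φ : ℝ)
    (hφ : φ ∈ Set.Ioo (0:ℝ) 1)
    (N : Fin n → Finset (Fin n)) (hN : ∀ i, i ∉ N i)
    (hNne : ∀ i, 1 ≤ (N i).card) :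
    ∀ a b : Fin n ⊕ Fin n,
      Relation.ReflTransGen (fun a b => 0 < stateP n φ N b a) a b := by
  obtain ⟨hφ0, hφ1⟩ := hφ
  have hnpos : (0:ℝ) < n := by exact_mod_cast hn
  have h1 : ∀ i : Fin n, 0 < stateP n φ N (.inr i) (.inl i) := by
    intro i; simp [stateP, hφ0]
  have h2 : ∀ i j : Fin n, 0 < stateP n φ N (.inr j) (.inr i) := by
    intro i j
    simp only [stateP]
    have : (0:ℝ) < 1 - φ := by linarith
    positivity
  have h3 : ∀ i j : Fin n, 0 < stateP n φ N (.inl j) (.inr i) := by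
    intro i j
    simp only [stateP]
    have hc : (0:ℝ) < (N j).card := by exact_mod_cast hNne j
    have : (0:ℝ) < 1 - φ := by linarith
    positivity
  intro a b
  match a, b with
  | .inl i, .inl j =>
      exact .head (h1 i) (.single (h3 i j))
  | .inl i, .inr j =>
      exact .head (h1 i) (.single (h2 i j))
  | .inr i, .inl j => exact .single (h3 i j)
  | .inr i, .inr j => exact .single (h2 i j)
end

section
/- If φ ∈ (0,1) and |N_i| = 0 for some agent i, then the subgraph of the digraph induced by the state matrix P restricted to the vertex set Ω = {n+1,…,2n} ∪ {j ≤ n : |N_j| > 0} is strongly connected, and every vertex in Ω is reachable from every isolated opinion node i with |N_i| = 0. -/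
/-- With some isolated agent, the subgraph induced on
`Ω = {action nodes} ∪ {opinion nodes with a neighbor}` is strongly connected,
and every vertex of `Ω` is reachable from every isolated opinion node. -/
theorem stateP_sink_component (n : ℕ) (hn : 1 ≤ n) (φ : ℝ)
    (hφ : φ ∈ Set.Ioo (0:ℝ) 1)
    (N : Fin n → Finset (Fin n)) (hN : ∀ j, j ∉ N j)
    (i : Fin n) (hi : N i = ∅) :
    letI Ω : Set (Fin n ⊕ Fin n) :=
      {a | ∀ j : Fin n, a = Sum.inl j → (N j).Nonempty}
    (∀ a ∈ Ω, ∀ b ∈ Ω,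
      Relation.ReflTransGen
        (fun a b => a ∈ Ω ∧ b ∈ Ω ∧ 0 < stateP n φ N b a) a b) ∧
    (∀ a ∈ Ω,
      Relation.ReflTransGen (fun a b => 0 < stateP n φ N b a) (Sum.inl i) a) := by
  obtain ⟨hφ0, hφ1⟩ := hφ
  set Ω : Set (Fin n ⊕ Fin n) :=
    {a | ∀ j : Fin n, a = Sum.inl j → (N j).Nonempty} with hΩ
  have hn' : (0:ℝ) < n := by exact_mod_cast hn
  have h1φ : (0:ℝ) < 1 - φ := by linarith
  have hinr : ∀ k : Fin n, Sum.inr k ∈ Ω := by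
    intro k j h; exact absurd h (by simp)
  -- edge: opinion j → action j
  have e1 : ∀ j : Fin n, 0 < stateP n φ N (Sum.inr j) (Sum.inl j) := by
    intro j; simpa [stateP] using hφ0
  -- edge: action k → action k'
  have e2 : ∀ k k' : Fin n, 0 < stateP n φ N (Sum.inr k') (Sum.inr k) := by
    intro k k'; simp only [stateP]; positivity
  -- edge: action k → opinion j when N j nonempty
  have e3 : ∀ (j : Fin n), (N j).Nonempty → ∀ k : Fin n,
      0 < stateP n φ N (Sum.inl j) (Sum.inr k) := by
    intro j hj k
    have hc : (0:ℝ) < (N j).card := by exact_mod_cast Finset.card_pos.mpr hj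
    simp only [stateP]
    positivity
  constructor
  · intro a ha b hb
    set R : (Fin n ⊕ Fin n) → (Fin n ⊕ Fin n) → Prop :=
      fun a b => a ∈ Ω ∧ b ∈ Ω ∧ 0 < stateP n φ N b a with hR
    show Relation.ReflTransGen R a b
    -- from a reach some action node
    obtain ⟨k, hk⟩ : ∃ k, Relation.ReflTransGen R a (Sum.inr k) := by
      cases a with
      | inl j =>
          exact ⟨j, Relation.ReflTransGen.single ⟨ha, hinr j, e1 j⟩⟩
      | inr k => exact ⟨k, Relation.ReflTransGen.refl⟩
    refine hk.trans ?_
    -- from action k reach b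
    cases b with
    | inl j =>
        exact Relation.ReflTransGen.single ⟨hinr k, hb, e3 j (hb j rfl) k⟩
    | inr k' =>
        exact Relation.ReflTransGen.single ⟨hinr k, hinr k', e2 k k'⟩
  · intro a ha
    have step1 : Relation.ReflTransGen (fun a b => 0 < stateP n φ N b a)
        (Sum.inl i) (Sum.inr i) := Relation.ReflTransGen.single (e1 i)
    refine step1.trans ?_
    cases a with
    | inl j => exact Relation.ReflTransGen.single (e3 j (ha j rfl) i)
    | inr k => exact Relation.ReflTransGen.single (e2 i k)
end

section
/- In the opinion–action coevolution model with φ = 0 and n ≥ 2, if agent i satisfies |x_i(1) - y_avg(0)| ≤ ε, then for all t ≥ 1, x_i(t+1) - y_avg(0) = (1/n)(x_i(t) - y_avg(0)); consequently |x_i(t) - y_avg(0)| = (1/n)^{t-1} |x_i(1) - y_avg(0)| for t ≥ 1, and x_i(t) → y_avg(0) as t → ∞. -/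
open Filter in
/-- With `φ = 0`, an agent whose opinion at time 1 is within `ε` of the initial
average action contracts towards it with ratio `1/n`, and converges to it. -/
theorem opinion_converges_phi_zero (n : ℕ) (hn : 2 ≤ n) (ε : ℝ)
    (hε : ε ∈ Set.Icc (0:ℝ) 1) (φ : ℝ) (hφ : φ = 0)
    (x y : ℕ → Fin n → ℝ)
    (hx : ∀ t i, x (t+1) i =
      ((∑ j ∈ Finset.univ.filter (fun j => j ≠ i ∧ |x t i - y t j| ≤ ε),
          y t j) + x t i) /
        ((Finset.univ.filter (fun j => j ≠ i ∧ |x t i - y t j| ≤ ε)).card + 1))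
    (hy : ∀ t i, y (t+1) i = φ * x (t+1) i + (1 - φ) * ((∑ k, y t k) / n))
    (i : Fin n) (hnear : |x 1 i - (∑ k, y 0 k) / n| ≤ ε) :
    (∀ t, 1 ≤ t →
      x (t+1) i - (∑ k, y 0 k) / n = (1 / n) * (x t i - (∑ k, y 0 k) / n)) ∧
    (∀ t, 1 ≤ t →
      |x t i - (∑ k, y 0 k) / n| = (1 / n) ^ (t - 1) * |x 1 i - (∑ k, y 0 k) / n|) ∧
    Tendsto (fun t => x t i) atTop (nhds ((∑ k, y 0 k) / n)) := by
  subst hφ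
  set a : ℝ := (∑ k, y 0 k) / n with ha
  have hnpos : (0:ℝ) < n := by
    have : (0:ℕ) < n := by omega
    exact_mod_cast this
  have hn0 : (n:ℝ) ≠ 0 := ne_of_gt hnpos
  -- all actions equal a from time 1 on
  have hya : ∀ t, 1 ≤ t → ∀ j, y t j = a := by
    intro t
    induction t with
    | zero => omega
    | succ s ih =>
      intro _ j
      rw [hy]
      simp only [zero_mul, sub_zero, one_mul, zero_add]
      rcases Nat.eq_zero_or_pos s with hs | hs
      · subst hs; rfl
      · have : (∑ k, y s k) = n * a := by
          rw [Finset.sum_congr rfl (fun k _ => ih hs k)]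
          simp [mul_comm]
        rw [this, mul_div_cancel_left₀ _ hn0]
  -- one contraction step
  have step : ∀ t, 1 ≤ t → |x t i - a| ≤ ε →
      x (t+1) i - a = (1/n) * (x t i - a) := by
    intro t ht hnr
    rw [hx]
    have hset : Finset.univ.filter (fun j => j ≠ i ∧ |x t i - y t j| ≤ ε)
        = Finset.univ.filter (fun j => j ≠ i) := by
      apply Finset.filter_congr
      intro j _
      simp [hya t ht j, hnr]
    rw [hset]
    have hcard : (Finset.univ.filter (fun j => j ≠ i)).card = n - 1 := by
      rw [Finset.filter_ne']
      simp [Finset.card_erase_of_mem]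
    have hsum : (∑ j ∈ Finset.univ.filter (fun j => j ≠ i), y t j)
        = ((n:ℝ) - 1) * a := by
      rw [Finset.sum_congr rfl (fun j _ => hya t ht j), Finset.sum_const, hcard]
      have : ((n - 1 : ℕ) : ℝ) = (n:ℝ) - 1 := by
        have : (1:ℕ) ≤ n := by omega
        push_cast [this]
        ring
      rw [nsmul_eq_mul, this]
    rw [hsum, hcard]
    have hc : ((n - 1 : ℕ) : ℝ) + 1 = (n:ℝ) := by
      have : (1:ℕ) ≤ n := by omega
      push_cast [this]
      ring
    rw [hc]
    field_simp
    ring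
  -- maintained invariant
  have key : ∀ t, 1 ≤ t → |x t i - a| ≤ ε ∧
      x (t+1) i - a = (1/n) * (x t i - a) := by
    intro t
    induction t with
    | zero => omega
    | succ s ih =>
      intro _
      rcases Nat.eq_zero_or_pos s with hs | hs
      · subst hs
        exact ⟨hnear, step 1 le_rfl hnear⟩
      · obtain ⟨h1, h2⟩ := ih hs
        have habs : |x (s+1) i - a| ≤ ε := by
          rw [h2, abs_mul]
          have h1n : |(1:ℝ)/n| ≤ 1 := by
            rw [abs_of_pos (by positivity)]
            rw [div_le_one hnpos]
            exact_mod_cast (by omega : 1 ≤ n)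
          calc |(1:ℝ)/n| * |x s i - a| ≤ 1 * |x s i - a| :=
                mul_le_mul_of_nonneg_right h1n (abs_nonneg _)
            _ = |x s i - a| := one_mul _
            _ ≤ ε := h1
        exact ⟨habs, step (s+1) (by omega) habs⟩
  have part1 : ∀ t, 1 ≤ t → x (t+1) i - a = (1/n) * (x t i - a) :=
    fun t ht => (key t ht).2
  have part2 : ∀ t, 1 ≤ t →
      |x t i - a| = (1/n) ^ (t-1) * |x 1 i - a| := by
    intro t
    induction t with
    | zero => omega
    | succ s ih =>
      intro _
      rcases Nat.eq_zero_or_pos s with hs | hs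
      · subst hs; simp
      · rw [part1 s hs, abs_mul, ih hs]
        have h1n : |(1:ℝ)/n| = 1/n := abs_of_pos (by positivity)
        rw [h1n, ← mul_assoc, ← pow_succ']
        congr 2
        omega
  refine ⟨part1, part2, ?_⟩
  have hlt : (1:ℝ)/n < 1 := by
    rw [div_lt_one hnpos]
    exact_mod_cast (by omega : 1 < n)
  have h0 : (0:ℝ) ≤ 1/n := by positivity
  have hg : Tendsto (fun t : ℕ => (1/(n:ℝ)) ^ (t-1) * |x 1 i - a|) atTop (nhds 0) := by
    have hp : Tendsto (fun t : ℕ => (1/(n:ℝ)) ^ t) atTop (nhds 0) :=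
      tendsto_pow_atTop_nhds_zero_of_lt_one h0 hlt
    have hsub : Tendsto (fun t : ℕ => t - 1) atTop atTop :=
      tendsto_sub_atTop_nat 1
    have := (hp.comp hsub).mul_const |x 1 i - a|
    simpa using this
  have habs : Tendsto (fun t => |x t i - a|) atTop (nhds 0) := by
    apply hg.congr'
    filter_upwards [eventually_ge_atTop 1] with t ht
    exact (part2 t ht).symm
  have hdiff : Tendsto (fun t => x t i - a) atTop (nhds 0) := by
    rwa [tendsto_zero_iff_abs_tendsto_zero]
  have := hdiff.add_const a
  simpa using this
end

section
/- Consider a sequence of row-stochastic matrices A(t) ∈ ℝ^{n×n}, t ∈ ℕ, and the dynamics x(t+1) = A(t) x(t). Suppose (i) there is α > 0 with a_{ij}(t) ≥ α whenever a_{ij}(t) > 0, (ii) there is β > 0 with a_{ii}(t) ≥ β for all i, t, and (iii) each A(t) is cut-balanced. Then for each i the limit x_i* = lim_{t→∞} x_i(t) exists. -/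
/-!
Sort the entries of `x t` increasingly and let `S_c(t)` be the sum of the `c + 1` smallest ones.
Write `g_m ≥ 0` for the gap between the `m`-th and `(m+1)`-st sorted values and `U_m` for the
total weight of the entries of `A t` crossing this cut upwards. By cut balance and the bound `α`,
the weight crossing it downwards is at most `(n / α) U_m`, and the diagonal bound `β` keeps the
entries above the cut from falling; together they give
`S_c(t+1) ≥ S_c(t) + (min α β / n) g_c U_c - (n / α) ∑_{m < c} g_m U_m`.
As every `S_c` is bounded, induction on `c` makes `∑_t g_m(t) U_m(t)` finite for every `m`.
An entry moves in one step by at most `(1 + n / α) ∑_m g_m U_m`, so its increments are summable.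
-/

open Finset Matrix

namespace CutBalancedConsensus

lemma summable_of_mul_le_sub_add {f e u : ℕ → ℝ} {a M : ℝ} (ha : 0 < a) (hf : ∀ t, 0 ≤ f t)
    (he : Summable e) (he0 : ∀ t, 0 ≤ e t) (hu : ∀ t, |u t| ≤ M)
    (h : ∀ t, a * f t ≤ u (t + 1) - u t + e t) : Summable f := by
  refine summable_of_sum_range_le hf (c := (2 * M + ∑' t, e t) / a) fun τ => ?_
  rw [le_div_iff₀' ha, mul_sum]
  calc ∑ t ∈ range τ, a * f t ≤ ∑ t ∈ range τ, (u (t + 1) - u t + e t) :=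
        sum_le_sum fun t _ => h t
    _ = u τ - u 0 + ∑ t ∈ range τ, e t := by rw [sum_add_distrib, sum_range_sub]
    _ ≤ 2 * M + ∑' t, e t := by
        linarith [abs_le.1 (hu τ), abs_le.1 (hu 0), he.sum_le_tsum (range τ) fun t _ => he0 t]

theorem summable_of_triangular_increase {n : ℕ} {S V : ℕ → ℕ → ℝ} {a K M : ℝ} (ha : 0 < a)
    (hK : 0 ≤ K) (hV : ∀ t m, 0 ≤ V t m) (hS : ∀ t, ∀ c < n, |S t c| ≤ M)
    (hstep : ∀ t, ∀ c < n, S t c + a * V t c - K * ∑ m ∈ range c, V t m ≤ S (t + 1) c) :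
    ∀ c < n, Summable fun t => V t c := by
  intro c
  induction c using Nat.strong_induction_on with
  | _ c ih =>
    intro hc
    have hlower : Summable fun t => K * ∑ m ∈ range c, V t m :=
      (summable_sum fun m hm => ih m (mem_range.1 hm) ((mem_range.1 hm).trans hc)).mul_left K
    exact summable_of_mul_le_sub_add ha (hV · c) hlower
      (fun t => mul_nonneg hK (sum_nonneg fun m _ => hV t m)) (hS · c hc)
      fun t => by linarith [hstep t c hc]

open Filter Topology in
lemma exists_tendsto_of_abs_sub_le {u d : ℕ → ℝ} (hd : Summable d)
    (h : ∀ t, |u (t + 1) - u t| ≤ d t) : ∃ L, Tendsto u atTop (𝓝 L) :=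
  cauchySeq_tendsto_of_complete <| cauchySeq_of_dist_le_of_summable d
    (fun t => by rw [Real.dist_eq, abs_sub_comm]; exact h t) hd

section SortedFrame

/- Positions `0, 1, …` list the entries in increasing order (`y` is monotone), `b p q` is the weight
that position `p` puts on position `q`, and cut `m` separates the positions `≤ m` from those `> m`.
Cut balance enters as `hcut`: a positive flow down across a cut forces a positive flow up. -/

variable {n : ℕ} {b : ℕ → ℕ → ℝ} {y : ℕ → ℝ} {α β : ℝ} {T : Finset ℕ} {c m p q : ℕ}

def gap (y : ℕ → ℝ) (m : ℕ) : ℝ := y (m + 1) - y m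

noncomputable def upFlow (n : ℕ) (b : ℕ → ℕ → ℝ) (T : Finset ℕ) (m : ℕ) : ℝ :=
  ∑ p ∈ T, ∑ q ∈ range n, if p ≤ m ∧ m < q then b p q else 0

noncomputable def downFlow (n : ℕ) (b : ℕ → ℕ → ℝ) (T : Finset ℕ) (m : ℕ) : ℝ :=
  ∑ p ∈ T, ∑ q ∈ range n, if q ≤ m ∧ m < p then b p q else 0

lemma gap_nonneg (hy : Monotone y) (m : ℕ) : 0 ≤ gap y m :=
  sub_nonneg.2 (hy m.le_succ)

lemma sum_range_ite_gap (hpq : p ≤ q) (hq : q ≤ n) :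
    ∑ m ∈ range n, (if p ≤ m ∧ m < q then gap y m else 0) = y q - y p := by
  rw [← sum_filter, show (range n).filter (fun m => p ≤ m ∧ m < q) = Ico p q by
    ext; simp only [mem_filter, mem_range, mem_Ico]; omega]
  exact sum_Ico_sub y hpq

lemma sum_range_ite_gap_eq_zero (hqp : q ≤ p) :
    ∑ m ∈ range n, (if p ≤ m ∧ m < q then gap y m else 0) = 0 :=
  sum_eq_zero fun m _ => if_neg (by omega)

lemma sub_eq_sum_range_ite_gap (hp : p ≤ n) (hq : q ≤ n) :
    y q - y p = ∑ m ∈ range n, (if p ≤ m ∧ m < q then gap y m else 0)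
      - ∑ m ∈ range n, (if q ≤ m ∧ m < p then gap y m else 0) := by
  rcases le_total p q with h | h
  · rw [sum_range_ite_gap h hq, sum_range_ite_gap_eq_zero h, sub_zero]
  · rw [sum_range_ite_gap_eq_zero h, sum_range_ite_gap h hp, zero_sub, neg_sub]

lemma abs_sub_eq_sum_range_ite_gap (hy : Monotone y) (hp : p ≤ n) (hq : q ≤ n) :
    |y q - y p| = ∑ m ∈ range n, (if p ≤ m ∧ m < q then gap y m else 0)
      + ∑ m ∈ range n, (if q ≤ m ∧ m < p then gap y m else 0) := by
  rcases le_total p q with h | h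
  · rw [sum_range_ite_gap h hq, sum_range_ite_gap_eq_zero h, add_zero,
      abs_of_nonneg (sub_nonneg.2 (hy h))]
  · rw [sum_range_ite_gap_eq_zero h, sum_range_ite_gap h hp, zero_add,
      abs_of_nonpos (sub_nonpos.2 (hy h)), neg_sub]

lemma sum_sum_mul_sum_ite_gap (P : ℕ → ℕ → ℕ → Prop) [∀ p q m, Decidable (P p q m)]
    (T : Finset ℕ) :
    ∑ p ∈ T, ∑ q ∈ range n, b p q * ∑ m ∈ range n, (if P p q m then gap y m else 0) =
      ∑ m ∈ range n, gap y m * ∑ p ∈ T, ∑ q ∈ range n, (if P p q m then b p q else 0) := by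
  simp only [mul_sum, mul_ite, mul_zero, mul_comm (b _ _) (gap y _)]
  exact (sum_congr rfl fun _ _ => sum_comm).trans sum_comm

theorem sum_sum_mul_sub_eq_sum_gap_mul (hT : T ⊆ range n) :
    ∑ p ∈ T, ∑ q ∈ range n, b p q * (y q - y p) =
      ∑ m ∈ range n, gap y m * (upFlow n b T m - downFlow n b T m) := by
  have hle : ∀ p ∈ T, p ≤ n := fun p hp => (mem_range.1 (hT hp)).le
  rw [sum_congr rfl fun p hp => sum_congr rfl fun q hq => by
    rw [sub_eq_sum_range_ite_gap (hle p hp) (mem_range.1 hq).le, mul_sub]]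
  simp only [sum_sub_distrib, sum_sum_mul_sum_ite_gap, upFlow, downFlow, mul_sub]

theorem sum_sum_mul_abs_sub_eq_sum_gap_mul (hy : Monotone y) :
    ∑ p ∈ range n, ∑ q ∈ range n, b p q * |y q - y p| =
      ∑ m ∈ range n, gap y m * (upFlow n b (range n) m + downFlow n b (range n) m) := by
  rw [sum_congr rfl fun p hp => sum_congr rfl fun q hq => by
    rw [abs_sub_eq_sum_range_ite_gap hy (mem_range.1 hp).le (mem_range.1 hq).le, mul_add]]
  simp only [sum_add_distrib, sum_sum_mul_sum_ite_gap, upFlow, downFlow, mul_add]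

lemma sum_sum_ite_nonneg (hb : ∀ p q, 0 ≤ b p q) (T Q : Finset ℕ) (P : ℕ → ℕ → Prop)
    [DecidableRel P] : 0 ≤ ∑ p ∈ T, ∑ q ∈ Q, if P p q then b p q else 0 :=
  sum_nonneg fun p _ => sum_nonneg fun q _ => ite_nonneg (hb p q) le_rfl

lemma upFlow_nonneg (hb : ∀ p q, 0 ≤ b p q) (T : Finset ℕ) (m : ℕ) : 0 ≤ upFlow n b T m :=
  sum_sum_ite_nonneg hb _ _ _

lemma downFlow_nonneg (hb : ∀ p q, 0 ≤ b p q) (T : Finset ℕ) (m : ℕ) :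
    0 ≤ downFlow n b T m :=
  sum_sum_ite_nonneg hb _ _ _

lemma exists_pos_of_sum_sum_ite_pos {T Q : Finset ℕ} {P : ℕ → ℕ → Prop} [DecidableRel P]
    (h : 0 < ∑ p ∈ T, ∑ q ∈ Q, if P p q then b p q else 0) :
    ∃ p ∈ T, ∃ q ∈ Q, P p q ∧ 0 < b p q := by
  by_contra! H
  refine h.not_ge (sum_nonpos fun p hp => sum_nonpos fun q hq => ?_)
  split_ifs with hP
  exacts [H p hp q hq hP, le_rfl]

lemma le_upFlow (hb : ∀ p q, 0 ≤ b p q) (hp : p ∈ T) (hq : q < n) (hpm : p ≤ m) (hmq : m < q) :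
    b p q ≤ upFlow n b T m := by
  calc b p q = if p ≤ m ∧ m < q then b p q else 0 := (if_pos ⟨hpm, hmq⟩).symm
    _ ≤ ∑ q ∈ range n, if p ≤ m ∧ m < q then b p q else 0 :=
        single_le_sum (f := fun q => if p ≤ m ∧ m < q then b p q else 0)
          (fun q _ => ite_nonneg (hb p q) le_rfl) (mem_range.2 hq)
    _ ≤ upFlow n b T m :=
        single_le_sum (f := fun p => ∑ q ∈ range n, if p ≤ m ∧ m < q then b p q else 0)
          (fun p _ => sum_nonneg fun q _ => ite_nonneg (hb p q) le_rfl) hp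

lemma sum_range_ite_le_one (hb : ∀ p q, 0 ≤ b p q)
    (hrow : ∀ p < n, ∑ q ∈ range n, b p q = 1) (hp : p < n) (P : ℕ → Prop) [DecidablePred P] :
    ∑ q ∈ range n, (if P q then b p q else 0) ≤ 1 :=
  (sum_le_sum fun q _ => by split_ifs; exacts [le_rfl, hb p q]).trans_eq (hrow p hp)

lemma upFlow_le_card (hb : ∀ p q, 0 ≤ b p q) (hrow : ∀ p < n, ∑ q ∈ range n, b p q = 1)
    (hT : T ⊆ range n) (m : ℕ) : upFlow n b T m ≤ #T := by
  simpa [upFlow] using sum_le_card_nsmul T _ 1 fun p hp =>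
    sum_range_ite_le_one hb hrow (mem_range.1 (hT hp)) (fun q => p ≤ m ∧ m < q)

lemma downFlow_le_card (hb : ∀ p q, 0 ≤ b p q) (hrow : ∀ p < n, ∑ q ∈ range n, b p q = 1)
    (hT : T ⊆ range n) (m : ℕ) : downFlow n b T m ≤ #T := by
  simpa [downFlow] using sum_le_card_nsmul T _ 1 fun p hp =>
    sum_range_ite_le_one hb hrow (mem_range.1 (hT hp)) (fun q => q ≤ m ∧ m < p)

lemma le_upFlow_of_pos (hb : ∀ p q, 0 ≤ b p q) (hlb : ∀ p q, 0 < b p q → α ≤ b p q)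
    (h : 0 < upFlow n b T m) : α ≤ upFlow n b T m := by
  obtain ⟨p, hp, q, hq, ⟨hpm, hmq⟩, hpos⟩ := exists_pos_of_sum_sum_ite_pos h
  exact (hlb p q hpos).trans (le_upFlow hb hp (mem_range.1 hq) hpm hmq)

lemma downFlow_le_mul_upFlow (hα : 0 < α) (hb : ∀ p q, 0 ≤ b p q)
    (hrow : ∀ p < n, ∑ q ∈ range n, b p q = 1) (hlb : ∀ p q, 0 < b p q → α ≤ b p q)
    (hcut : ∀ m, 0 < downFlow n b (range n) m → 0 < upFlow n b (range n) m) (m : ℕ) :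
    downFlow n b (range n) m ≤ n / α * upFlow n b (range n) m := by
  rcases (downFlow_nonneg hb (range n) m).eq_or_lt with h | h
  · rw [← h]
    exact mul_nonneg (by positivity) (upFlow_nonneg hb _ m)
  calc downFlow n b (range n) m ≤ n := by simpa using downFlow_le_card hb hrow subset_rfl m
    _ = n / α * α := by field_simp
    _ ≤ n / α * upFlow n b (range n) m :=
        mul_le_mul_of_nonneg_left (le_upFlow_of_pos hb hlb (hcut m h)) (by positivity)

theorem abs_sum_mul_sub_le (hα : 0 < α) (hb : ∀ p q, 0 ≤ b p q)
    (hrow : ∀ p < n, ∑ q ∈ range n, b p q = 1) (hlb : ∀ p q, 0 < b p q → α ≤ b p q)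
    (hcut : ∀ m, 0 < downFlow n b (range n) m → 0 < upFlow n b (range n) m)
    (hy : Monotone y) (hp : p < n) :
    |∑ q ∈ range n, b p q * (y q - y p)| ≤
      (1 + n / α) * ∑ m ∈ range n, gap y m * upFlow n b (range n) m := by
  calc |∑ q ∈ range n, b p q * (y q - y p)|
      ≤ ∑ q ∈ range n, b p q * |y q - y p| := by
        refine (abs_sum_le_sum_abs _ _).trans_eq (sum_congr rfl fun q _ => ?_)
        rw [abs_mul, abs_of_nonneg (hb p q)]
    _ ≤ ∑ p ∈ range n, ∑ q ∈ range n, b p q * |y q - y p| :=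
        single_le_sum (f := fun p => ∑ q ∈ range n, b p q * |y q - y p|)
          (fun p _ => sum_nonneg fun q _ => mul_nonneg (hb p q) (abs_nonneg _)) (mem_range.2 hp)
    _ = ∑ m ∈ range n, gap y m * (upFlow n b (range n) m + downFlow n b (range n) m) :=
        sum_sum_mul_abs_sub_eq_sum_gap_mul hy
    _ ≤ ∑ m ∈ range n, (1 + n / α) * (gap y m * upFlow n b (range n) m) :=
        sum_le_sum fun m _ => by
          nlinarith [mul_le_mul_of_nonneg_left (downFlow_le_mul_upFlow hα hb hrow hlb hcut m)
            (gap_nonneg hy m)]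
    _ = _ := (mul_sum _ _ _).symm

lemma downFlow_mono (hb : ∀ p q, 0 ≤ b p q) {S : Finset ℕ} (hTS : T ⊆ S) (m : ℕ) :
    downFlow n b T m ≤ downFlow n b S m :=
  sum_le_sum_of_subset_of_nonneg hTS fun p _ _ =>
    sum_nonneg fun q _ => ite_nonneg (hb p q) le_rfl

lemma downFlow_le_one_sub_mul_card (hb : ∀ p q, 0 ≤ b p q)
    (hrow : ∀ p < n, ∑ q ∈ range n, b p q = 1) (hdiag : ∀ p < n, β ≤ b p p)
    (hT : T ⊆ range n) (m : ℕ) : downFlow n b T m ≤ (1 - β) * #{p ∈ T | m < p} := by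
  rw [natCast_card_filter, mul_sum]
  refine sum_le_sum fun p hp => ?_
  have hpn := mem_range.1 (hT hp)
  split_ifs with hmp
  · calc ∑ q ∈ range n, (if q ≤ m ∧ m < p then b p q else 0)
        ≤ ∑ q ∈ (range n).erase p, b p q := by
          rw [← sum_filter]
          refine sum_le_sum_of_subset_of_nonneg (fun q => ?_) fun q _ _ => hb p q
          simp only [mem_filter, mem_erase, mem_range]
          omega
      _ = 1 - b p p := by rw [sum_erase_eq_sub (mem_range.2 hpn), hrow p hpn]
      _ ≤ (1 - β) * 1 := by linarith [hdiag p hpn]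
  · exact (sum_eq_zero fun q _ => if_neg (by omega)).le.trans (mul_zero _).ge

lemma sum_sum_mul_eq_sum_add_sum_gap_mul (hrow : ∀ p < n, ∑ q ∈ range n, b p q = 1)
    (hT : T ⊆ range n) :
    ∑ p ∈ T, ∑ q ∈ range n, b p q * y q =
      ∑ p ∈ T, y p + ∑ m ∈ range n, gap y m * (upFlow n b T m - downFlow n b T m) := by
  rw [← sum_sum_mul_sub_eq_sum_gap_mul hT, ← sum_add_distrib]
  refine sum_congr rfl fun p hp => ?_
  simp only [mul_sub, sum_sub_distrib, ← sum_mul, hrow p (mem_range.1 (hT hp)), one_mul]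
  ring

lemma sum_range_le_sum_min (hy : Monotone y) (hcard : #T = c + 1) :
    ∑ p ∈ range (c + 1), y p ≤ ∑ p ∈ T, y (min p c) := by
  set R := range (c + 1)
  have hcommon : ∑ p ∈ R ∩ T, y p = ∑ p ∈ T ∩ R, y (min p c) := by
    rw [inter_comm]
    refine sum_congr rfl fun p hp => ?_
    rw [mem_inter, mem_range] at hp
    rw [min_eq_left (by omega)]
  have hrest : ∑ p ∈ R \ T, y p ≤ ∑ p ∈ T \ R, y (min p c) := by
    calc ∑ p ∈ R \ T, y p ≤ ∑ p ∈ R \ T, y c :=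
          sum_le_sum fun p hp => hy (by rw [mem_sdiff, mem_range] at hp; omega)
      _ = ∑ p ∈ T \ R, y c := by
          rw [sum_const, sum_const, card_sdiff_comm (by rw [card_range, hcard])]
      _ = ∑ p ∈ T \ R, y (min p c) := sum_congr rfl fun p hp => by
          rw [mem_sdiff, mem_range] at hp
          rw [min_eq_right (by omega)]
  rw [← sum_inter_add_sum_sdiff R T, ← sum_inter_add_sum_sdiff T R]
  linarith

lemma sum_Ico_gap_mul_card_eq (hT : T ⊆ range (n + 1)) :
    ∑ m ∈ Ico c n, gap y m * #{p ∈ T | m < p} = ∑ p ∈ T, (y (max c p) - y c) := by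
  simp only [natCast_card_filter, mul_sum, mul_ite, mul_one, mul_zero]
  rw [sum_comm]
  refine sum_congr rfl fun p hp => ?_
  have hpn := mem_range.1 (hT hp)
  rw [← sum_filter, ← sum_Ico_sub y (le_max_left c p)]
  congr 1
  ext m
  simp only [mem_filter, mem_Ico]
  omega

lemma sum_range_add_sum_sub_le (hy : Monotone y) (hcard : #T = c + 1) :
    ∑ p ∈ range (c + 1), y p + ∑ p ∈ T, (y (max c p) - y c) ≤ ∑ p ∈ T, y p := by
  have h : ∀ p, y (min p c) + (y (max c p) - y c) = y p := fun p => by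
    rcases le_total p c with h | h
    · rw [min_eq_left h, max_eq_left h]; ring
    · rw [min_eq_right h, max_eq_right h]; ring
  calc _ ≤ ∑ p ∈ T, y (min p c) + ∑ p ∈ T, (y (max c p) - y c) := by
        gcongr; exact sum_range_le_sum_min hy hcard
    _ = ∑ p ∈ T, y p := by rw [← sum_add_distrib]; exact sum_congr rfl fun p _ => h p

lemma min_div_mul_gap_mul_upFlow_le (hα : 0 ≤ α) (hβ : 0 ≤ β) (hb : ∀ p q, 0 ≤ b p q)
    (hrow : ∀ p < n, ∑ q ∈ range n, b p q = 1) (hlb : ∀ p q, 0 < b p q → α ≤ b p q)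
    (hy : Monotone y) (hcard : #T = c + 1) (hc : c < n) :
    min α β / n * (gap y c * upFlow n b (range n) c) ≤
      β * ∑ p ∈ T, (y (max c p) - y c) + gap y c * upFlow n b T c := by
  set E := ∑ p ∈ T, (y (max c p) - y c)
  have hgap := gap_nonneg hy c
  have hE : 0 ≤ E := sum_nonneg fun p _ => sub_nonneg.2 (hy (le_max_left c p))
  have hupT : 0 ≤ gap y c * upFlow n b T c := mul_nonneg hgap (upFlow_nonneg hb T c)
  rcases (upFlow_nonneg hb (range n) c).eq_or_lt with hU | hU
  · rw [← hU, mul_zero, mul_zero]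
    nlinarith
  obtain ⟨p, -, q, hq, ⟨hpc, hcq⟩, hpos⟩ := exists_pos_of_sum_sum_ite_pos hU
  -- A heavy edge `p → q` crosses the cut upwards. If `p ∈ T` it lifts `T`; otherwise `T` is not
  -- `{0, …, c}`, so some element of `T` lies above the cut and keeps weight `β` on itself.
  have hgain : min α β * gap y c ≤ β * E + gap y c * upFlow n b T c := by
    by_cases hpT : p ∈ T
    · have : min α β ≤ upFlow n b T c := (min_le_left _ _).trans
        ((hlb p q hpos).trans (le_upFlow hb hpT (mem_range.1 hq) hpc hcq))
      nlinarith
    · obtain ⟨p', hp', hcp'⟩ : ∃ p' ∈ T, c < p' := by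
        by_contra! h
        have hTR : T = range (c + 1) := eq_of_subset_of_card_le
          (fun p hp => mem_range.2 (Nat.lt_succ_of_le (h p hp))) (by rw [card_range, hcard])
        exact hpT (hTR ▸ mem_range.2 (Nat.lt_succ_of_le hpc))
      have : gap y c ≤ E := calc
        gap y c ≤ y (max c p') - y c := by
          rw [max_eq_right hcp'.le]
          exact sub_le_sub_right (hy hcp') _
        _ ≤ E := single_le_sum (f := fun p => y (max c p) - y c)
          (fun p _ => sub_nonneg.2 (hy (le_max_left c p))) hp'
      nlinarith [min_le_right α β]
  have hn : (0 : ℝ) < n := by exact_mod_cast c.zero_le.trans_lt hc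
  calc min α β / n * (gap y c * upFlow n b (range n) c) ≤ min α β / n * (gap y c * n) := by
        gcongr
        simpa using upFlow_le_card hb hrow subset_rfl c
    _ = min α β * gap y c := by field_simp
    _ ≤ _ := hgain

theorem sum_range_add_gap_mul_upFlow_le (hα : 0 < α) (hβ : 0 ≤ β) (hb : ∀ p q, 0 ≤ b p q)
    (hrow : ∀ p < n, ∑ q ∈ range n, b p q = 1) (hlb : ∀ p q, 0 < b p q → α ≤ b p q)
    (hdiag : ∀ p < n, β ≤ b p p)
    (hcut : ∀ m, 0 < downFlow n b (range n) m → 0 < upFlow n b (range n) m)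
    (hy : Monotone y) (hT : T ⊆ range n) (hcard : #T = c + 1) (hc : c < n) :
    ∑ p ∈ range (c + 1), y p + min α β / n * (gap y c * upFlow n b (range n) c)
        - n / α * ∑ m ∈ range c, gap y m * upFlow n b (range n) m ≤
      ∑ p ∈ T, ∑ q ∈ range n, b p q * y q := by
  have hlow : -(n / α * ∑ m ∈ range c, gap y m * upFlow n b (range n) m) ≤
      ∑ m ∈ range c, gap y m * (upFlow n b T m - downFlow n b T m) := by
    rw [mul_sum, ← sum_neg_distrib]
    refine sum_le_sum fun m _ => ?_
    have hD := (downFlow_mono hb hT m).trans (downFlow_le_mul_upFlow hα hb hrow hlb hcut m)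
    nlinarith [mul_le_mul_of_nonneg_left hD (gap_nonneg hy m),
      mul_nonneg (gap_nonneg hy m) (upFlow_nonneg (n := n) hb T m)]
  have hhigh : ∑ m ∈ Ico c n, gap y m * upFlow n b T m
      - (1 - β) * ∑ p ∈ T, (y (max c p) - y c) ≤
      ∑ m ∈ Ico c n, gap y m * (upFlow n b T m - downFlow n b T m) := by
    rw [← sum_Ico_gap_mul_card_eq (hT.trans (range_subset_range.2 n.le_succ)), mul_sum,
      ← sum_sub_distrib]
    refine sum_le_sum fun m _ => ?_
    nlinarith [mul_le_mul_of_nonneg_left (downFlow_le_one_sub_mul_card hb hrow hdiag hT m)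
      (gap_nonneg hy m)]
  have hcross : gap y c * upFlow n b T c ≤ ∑ m ∈ Ico c n, gap y m * upFlow n b T m :=
    single_le_sum (f := fun m => gap y m * upFlow n b T m)
      (fun m _ => mul_nonneg (gap_nonneg hy m) (upFlow_nonneg hb T m)) (mem_Ico.2 ⟨le_rfl, hc⟩)
  have hgain := min_div_mul_gap_mul_upFlow_le hα.le hβ hb hrow hlb hy hcard hc
  have hexcess := sum_range_add_sum_sub_le hy hcard
  rw [sum_sum_mul_eq_sum_add_sum_gap_mul hrow hT, ← sum_range_add_sum_Ico _ hc.le]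
  linarith

end SortedFrame

def IsCutBalanced {ι : Type*} (A : Matrix ι ι ℝ) : Prop :=
  ∀ S : Set ι, S.Nonempty → S ≠ Set.univ →
    ((∃ i ∈ S, ∃ j ∉ S, 0 < A i j) ↔ (∃ i ∈ S, ∃ j ∉ S, 0 < A j i))

section Ranking

variable {k c p : ℕ} {α β B : ℝ} {A : Matrix (Fin (k + 1)) (Fin (k + 1)) ℝ}
  {v : Fin (k + 1) → ℝ}

/-- Positions beyond the last are clamped to it, so that `v ∘ rankedIndex v` is monotone on `ℕ`. -/
noncomputable def rankedIndex (v : Fin (k + 1) → ℝ) (p : ℕ) : Fin (k + 1) :=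
  Tuple.sort v (Fin.clamp p k)

noncomputable def rank (v : Fin (k + 1) → ℝ) (j : Fin (k + 1)) : ℕ := (Tuple.sort v).symm j

lemma monotone_rankedIndex (v : Fin (k + 1) → ℝ) : Monotone (v ∘ rankedIndex v) :=
  fun p q hpq => Tuple.monotone_sort v <| Fin.le_def.2 <| by simp only [Fin.coe_clamp]; omega

lemma rank_lt (v : Fin (k + 1) → ℝ) (j : Fin (k + 1)) : rank v j < k + 1 :=
  ((Tuple.sort v).symm j).isLt

lemma rankedIndex_coe (v : Fin (k + 1) → ℝ) (i : Fin (k + 1)) :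
    rankedIndex v i = Tuple.sort v i := by
  rw [rankedIndex]
  congr
  ext
  simp [Fin.coe_clamp, Nat.le_of_lt_succ i.isLt]

lemma rankedIndex_rank (v : Fin (k + 1) → ℝ) (j : Fin (k + 1)) :
    rankedIndex v (rank v j) = j := by
  rw [rank, rankedIndex_coe, Equiv.apply_symm_apply]

lemma rank_rankedIndex (v : Fin (k + 1) → ℝ) (hp : p < k + 1) :
    rank v (rankedIndex v p) = p := by
  rw [show p = ((⟨p, hp⟩ : Fin (k + 1)) : ℕ) from rfl, rankedIndex_coe, rank,
    Equiv.symm_apply_apply]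

lemma sum_range_rankedIndex {M : Type*} [AddCommMonoid M] (v : Fin (k + 1) → ℝ)
    (f : Fin (k + 1) → M) : ∑ p ∈ range (k + 1), f (rankedIndex v p) = ∑ j, f j := by
  rw [← Fin.sum_univ_eq_sum_range]
  simp only [rankedIndex_coe]
  exact Equiv.sum_comp _ f

noncomputable def sortedMatrix (A : Matrix (Fin (k + 1)) (Fin (k + 1)) ℝ) (v : Fin (k + 1) → ℝ)
    (p q : ℕ) : ℝ :=
  A (rankedIndex v p) (rankedIndex v q)

noncomputable def lowSum (v : Fin (k + 1) → ℝ) (c : ℕ) : ℝ :=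
  ∑ p ∈ range (c + 1), v (rankedIndex v p)

noncomputable def mixing (A : Matrix (Fin (k + 1)) (Fin (k + 1)) ℝ) (v : Fin (k + 1) → ℝ)
    (m : ℕ) : ℝ :=
  gap (v ∘ rankedIndex v) m * upFlow (k + 1) (sortedMatrix A v) (range (k + 1)) m

lemma sum_range_sortedMatrix (hrow : ∀ i, ∑ j, A i j = 1) (v : Fin (k + 1) → ℝ) (p : ℕ) :
    ∑ q ∈ range (k + 1), sortedMatrix A v p q = 1 :=
  (sum_range_rankedIndex v _).trans (hrow _)

lemma mulVec_rankedIndex (A : Matrix (Fin (k + 1)) (Fin (k + 1)) ℝ) (v : Fin (k + 1) → ℝ)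
    (p : ℕ) :
    (A *ᵥ v) (rankedIndex v p) =
      ∑ q ∈ range (k + 1), sortedMatrix A v p q * (v ∘ rankedIndex v) q :=
  (sum_range_rankedIndex v fun j => A (rankedIndex v p) j * v j).symm

lemma mixing_nonneg (hnonneg : ∀ i j, 0 ≤ A i j) (v : Fin (k + 1) → ℝ) (m : ℕ) :
    0 ≤ mixing A v m :=
  mul_nonneg (gap_nonneg (monotone_rankedIndex v) m) (upFlow_nonneg (fun _ _ => hnonneg _ _) _ m)

lemma IsCutBalanced.upFlow_pos_of_downFlow_pos (hA : IsCutBalanced A)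
    (hnonneg : ∀ i j, 0 ≤ A i j) (v : Fin (k + 1) → ℝ) (m : ℕ)
    (h : 0 < downFlow (k + 1) (sortedMatrix A v) (range (k + 1)) m) :
    0 < upFlow (k + 1) (sortedMatrix A v) (range (k + 1)) m := by
  obtain ⟨p, hp, q, -, ⟨hqm, hmp⟩, hpos⟩ := exists_pos_of_sum_sum_ite_pos h
  have hp := mem_range.1 hp
  let S : Set (Fin (k + 1)) := {j | rank v j ≤ m}
  have hqS : rankedIndex v q ∈ S := by
    show rank v _ ≤ m
    rwa [rank_rankedIndex v (by omega)]
  have hpS : rankedIndex v p ∉ S := by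
    show ¬ rank v _ ≤ m
    rw [rank_rankedIndex v hp]
    omega
  obtain ⟨i, hi, j, hj, hij⟩ := (hA S ⟨_, hqS⟩ fun hS => hpS (hS ▸ Set.mem_univ _)).2
    ⟨_, hqS, _, hpS, hpos⟩
  have := le_upFlow (fun _ _ => hnonneg _ _) (mem_range.2 (rank_lt v i)) (rank_lt v j) hi
    (not_le.1 hj) (b := sortedMatrix A v) (m := m)
  rw [sortedMatrix, rankedIndex_rank, rankedIndex_rank] at this
  linarith

lemma exists_lowSum_eq_sum (v w : Fin (k + 1) → ℝ) (hc : c < k + 1) :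
    ∃ T ⊆ range (k + 1), #T = c + 1 ∧ lowSum w c = ∑ p ∈ T, w (rankedIndex v p) := by
  have hinj : Set.InjOn (fun p => rank v (rankedIndex w p)) (range (c + 1)) := by
    intro p hp q hq h
    have h' := congrArg (rankedIndex v) h
    simp only [rankedIndex_rank] at h'
    rw [← rank_rankedIndex w (lt_of_lt_of_le (mem_range.1 hp) hc),
      ← rank_rankedIndex w (lt_of_lt_of_le (mem_range.1 hq) hc), h']
  refine ⟨(range (c + 1)).image fun p => rank v (rankedIndex w p), fun _ h => ?_,
    by rw [card_image_of_injOn hinj, card_range], ?_⟩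
  · obtain ⟨p, -, rfl⟩ := mem_image.1 h
    exact mem_range.2 (rank_lt _ _)
  · rw [sum_image hinj]
    simp only [rankedIndex_rank, lowSum]

theorem lowSum_add_mixing_le (hα : 0 < α) (hβ : 0 < β) (hnonneg : ∀ i j, 0 ≤ A i j)
    (hrow : ∀ i, ∑ j, A i j = 1) (hlb : ∀ i j, 0 < A i j → α ≤ A i j) (hdiag : ∀ i, β ≤ A i i)
    (hA : IsCutBalanced A) (v : Fin (k + 1) → ℝ) (hc : c < k + 1) :
    lowSum v c + min α β / (k + 1) * mixing A v c
        - (k + 1) / α * ∑ m ∈ range c, mixing A v m ≤ lowSum (A *ᵥ v) c := by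
  obtain ⟨T, hT, hcard, hsum⟩ := exists_lowSum_eq_sum v (A *ᵥ v) hc
  rw [hsum]
  simp only [mulVec_rankedIndex]
  exact_mod_cast sum_range_add_gap_mul_upFlow_le hα hβ.le (fun _ _ => hnonneg _ _)
    (fun p _ => sum_range_sortedMatrix hrow v p) (fun _ _ => hlb _ _) (fun _ _ => hdiag _)
    (hA.upFlow_pos_of_downFlow_pos hnonneg v) (monotone_rankedIndex v) hT hcard hc

theorem abs_mulVec_sub_le (hα : 0 < α) (hnonneg : ∀ i j, 0 ≤ A i j)
    (hrow : ∀ i, ∑ j, A i j = 1) (hlb : ∀ i j, 0 < A i j → α ≤ A i j) (hA : IsCutBalanced A)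
    (v : Fin (k + 1) → ℝ) (i : Fin (k + 1)) :
    |(A *ᵥ v) i - v i| ≤ (1 + (k + 1) / α) * ∑ m ∈ range (k + 1), mixing A v m := by
  set p := rank v i
  have hupdate : (A *ᵥ v) i - v i =
      ∑ q ∈ range (k + 1),
        sortedMatrix A v p q * ((v ∘ rankedIndex v) q - (v ∘ rankedIndex v) p) :=
    calc (A *ᵥ v) i - v i = (A *ᵥ v) (rankedIndex v p) - (v ∘ rankedIndex v) p := by
          rw [Function.comp_apply, rankedIndex_rank]
      _ = _ := by
          rw [mulVec_rankedIndex]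
          simp only [mul_sub, sum_sub_distrib, ← sum_mul, sum_range_sortedMatrix hrow, one_mul]
  rw [hupdate]
  exact_mod_cast abs_sum_mul_sub_le hα (fun _ _ => hnonneg _ _)
    (fun p _ => sum_range_sortedMatrix hrow v p) (fun _ _ => hlb _ _)
    (hA.upFlow_pos_of_downFlow_pos hnonneg v) (monotone_rankedIndex v) (rank_lt v i)

lemma abs_mulVec_le (hnonneg : ∀ i j, 0 ≤ A i j) (hrow : ∀ i, ∑ j, A i j = 1)
    (hv : ∀ j, |v j| ≤ B) (i : Fin (k + 1)) : |(A *ᵥ v) i| ≤ B :=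
  calc |(A *ᵥ v) i| ≤ ∑ j, A i j * |v j| := by
        rw [mulVec, dotProduct]
        refine (abs_sum_le_sum_abs _ _).trans_eq (sum_congr rfl fun j _ => ?_)
        rw [abs_mul, abs_of_nonneg (hnonneg i j)]
    _ ≤ ∑ j, A i j * B := sum_le_sum fun j _ => mul_le_mul_of_nonneg_left (hv j) (hnonneg i j)
    _ = B := by rw [← sum_mul, hrow, one_mul]

lemma abs_lowSum_le (hv : ∀ j, |v j| ≤ B) (hc : c < k + 1) : |lowSum v c| ≤ (k + 1) * B :=
  calc |lowSum v c| ≤ ∑ p ∈ range (c + 1), |v (rankedIndex v p)| :=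
        abs_sum_le_sum_abs (fun p => v (rankedIndex v p)) _
    _ ≤ ∑ p ∈ range (c + 1), B := sum_le_sum fun p _ => hv _
    _ = (c + 1) * B := by simp
    _ ≤ (k + 1) * B :=
        mul_le_mul_of_nonneg_right (by exact_mod_cast hc) ((abs_nonneg _).trans (hv 0))

end Ranking

end CutBalancedConsensus

open CutBalancedConsensus

open Filter in
/-- Convergence for cut-balanced averaging dynamics (Theorem 2 of [ref12],
existence of limits). -/
theorem cut_balanced_convergence (n : ℕ) (A : ℕ → Matrix (Fin n) (Fin n) ℝ)
    (hnonneg : ∀ t i j, 0 ≤ A t i j)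
    (hrow : ∀ t i, ∑ j, A t i j = 1)
    (α : ℝ) (hα : 0 < α) (hlb : ∀ t i j, 0 < A t i j → α ≤ A t i j)
    (β : ℝ) (hβ : 0 < β) (hdiag : ∀ t i, β ≤ A t i i)
    (hcb : ∀ t, ∀ S : Set (Fin n), S.Nonempty → S ≠ Set.univ →
      ((∃ i ∈ S, ∃ j ∉ S, 0 < A t i j) ↔ (∃ i ∈ S, ∃ j ∉ S, 0 < A t j i)))
    (x : ℕ → Fin n → ℝ)
    (hx : ∀ t i, x (t+1) i = ∑ j, A t i j * x t j) :
    ∀ i, ∃ L : ℝ, Tendsto (fun t => x t i) atTop (nhds L) := by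
  intro i
  obtain ⟨k, rfl⟩ : ∃ k, n = k + 1 := Nat.exists_eq_add_one.2 (Fin.pos i)
  have hxA : ∀ t, x (t + 1) = A t *ᵥ x t := fun t => funext (hx t)
  obtain ⟨B, hB0⟩ := Finite.exists_le fun j => |x 0 j|
  have hB : ∀ t j, |x t j| ≤ B := by
    intro t
    induction t with
    | zero => exact hB0
    | succ t ih => rw [hxA]; exact abs_mulVec_le (hnonneg t) (hrow t) ih
  have hmix : ∀ c < k + 1, Summable fun t => mixing (A t) (x t) c :=
    summable_of_triangular_increase (S := fun t => lowSum (x t))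
      (div_pos (lt_min hα hβ) (by positivity)) (by positivity)
      (fun t => mixing_nonneg (hnonneg t) (x t)) (fun t _ hc => abs_lowSum_le (hB t) hc)
      fun t _ hc => hxA t ▸ lowSum_add_mixing_le hα hβ (hnonneg t) (hrow t) (hlb t) (hdiag t)
        (hcb t) (x t) hc
  refine exists_tendsto_of_abs_sub_le
    ((summable_sum fun c hc => hmix c (mem_range.1 hc)).mul_left (1 + (k + 1) / α)) fun t => ?_
  rw [hxA]
  exact abs_mulVec_sub_le hα (hnonneg t) (hrow t) (hlb t) (hcb t) (x t) i
end

section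
/- Let A(t) be a sequence of cut-balanced row-stochastic n×n matrices with positive entries uniformly bounded below by α > 0 and diagonal entries bounded below by β > 0, driving x(t+1) = A(t)x(t). Let G = (V, E) be the digraph with (j,i) ∈ E iff a_{ij}(t) > 0 for infinitely many t. If nodes i and j lie in the same strongly connected component of G, then lim x_i(t) = lim x_j(t). -/
/-!
Let `γ = min α β`. Cut balance keeps every column sum of a backward product `A (s-1) ⋯ A t`
at least `γ ^ (n - 1)`: a set `I` of columns either exchanges no weight with its complement,
or some row outside `I` puts weight `≥ α` into `I`, and adding it to `I` costs a factor `γ`.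
A limit point of these column sums is an absolute probability sequence `π`
(`π t = π (t+1) A t`) bounded below by `p > 0`. For every level `c` the excess
`∑ i, π t i * (x t i - c)⁺` is nonincreasing by Jensen's inequality, so the Jensen gaps
`∑ j, A t i j * (x t j - c)⁺ - (x (t+1) i - c)⁺` tend to `0`.

A node oscillating between `s < r` cannot jump over a band `[a, b] ⊆ [s, r]` (its self-weight
`β` would create a gap `β (b - a)` at level `a`), so it visits every band infinitely often,
carrying mass `≥ p` across it; then the slope of the limiting excess drops by `p` across every
band, impossible for more than `n / p` bands. Likewise an edge `a → b` used infinitely often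
with weight `≥ α` creates a gap at the midpoint level unless the limits of `x a` and `x b`
agree, and the limits propagate along paths.
-/

open Filter Topology Finset Matrix

variable {ι : Type*} [Fintype ι]

def CutBalanced (M : Matrix ι ι ℝ) : Prop :=
  ∀ S : Set ι, S.Nonempty → S ≠ Set.univ →
    ((∃ i ∈ S, ∃ j ∉ S, 0 < M i j) ↔ (∃ i ∈ S, ∃ j ∉ S, 0 < M j i))

lemma sum_vecMul_eq (c : ι → ℝ) (M : Matrix ι ι ℝ) (I : Finset ι) :
    ∑ j ∈ I, (c ᵥ* M) j = ∑ k, c k * ∑ j ∈ I, M k j := by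
  simp only [Matrix.vecMul, dotProduct, Finset.mul_sum]
  exact Finset.sum_comm

lemma sum_vecMul_of_closed {M : Matrix ι ι ℝ} (hnonneg : ∀ k l, 0 ≤ M k l)
    (hrow : ∀ k, ∑ l, M k l = 1) (c : ι → ℝ) {I : Finset ι}
    (hout : ∀ i ∈ I, ∀ j ∉ I, M i j ≤ 0) (hin : ∀ i ∈ I, ∀ j ∉ I, M j i ≤ 0) :
    ∑ j ∈ I, (c ᵥ* M) j = ∑ j ∈ I, c j := by
  have hinside : ∀ k ∈ I, ∑ j ∈ I, M k j = 1 := fun k hk => by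
    rw [← hrow k, Finset.sum_subset (Finset.subset_univ I)]
    exact fun j _ hj => le_antisymm (hout k hk j hj) (hnonneg k j)
  have houtside : ∀ k ∉ I, ∑ j ∈ I, M k j = 0 := fun k hk =>
    Finset.sum_eq_zero fun j hj => le_antisymm (hin j hj k hk) (hnonneg k j)
  rw [sum_vecMul_eq, ← Finset.sum_subset (Finset.subset_univ I) fun k _ hk => by
    rw [houtside k hk, mul_zero]]
  exact Finset.sum_congr rfl fun k hk => by rw [hinside k hk, mul_one]

lemma mul_sum_insert_le_sum_vecMul [DecidableEq ι] {M : Matrix ι ι ℝ}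
    (hnonneg : ∀ k l, 0 ≤ M k l) {γ : ℝ} (hlb : ∀ k l, 0 < M k l → γ ≤ M k l)
    (hdiag : ∀ k, γ ≤ M k k) {c : ι → ℝ} (hc : 0 ≤ c) {I : Finset ι} {i j : ι}
    (hi : i ∈ I) (hji : 0 < M j i) :
    γ * ∑ k ∈ insert j I, c k ≤ ∑ k ∈ I, (c ᵥ* M) k := by
  have hweight : ∀ k ∈ insert j I, γ ≤ ∑ l ∈ I, M k l := by
    intro k hk
    rcases Finset.mem_insert.1 hk with rfl | hk
    · exact (hlb k i hji).trans (Finset.single_le_sum (fun l _ => hnonneg k l) hi)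
    · exact (hdiag k).trans (Finset.single_le_sum (fun l _ => hnonneg k l) hk)
  have hterm : ∀ k, 0 ≤ c k * ∑ l ∈ I, M k l := fun k =>
    mul_nonneg (hc k) (Finset.sum_nonneg fun l _ => hnonneg k l)
  calc γ * ∑ k ∈ insert j I, c k
      ≤ ∑ k ∈ insert j I, c k * ∑ l ∈ I, M k l := by
        rw [Finset.mul_sum]
        exact Finset.sum_le_sum fun k hk => by
          rw [mul_comm]; exact mul_le_mul_of_nonneg_left (hweight k hk) (hc k)
    _ ≤ ∑ k, c k * ∑ l ∈ I, M k l :=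
        Finset.sum_le_sum_of_subset_of_nonneg (Finset.subset_univ _) fun k _ _ => hterm k
    _ = ∑ k ∈ I, (c ᵥ* M) k := (sum_vecMul_eq c M I).symm

theorem CutBalanced.pow_le_sum_vecMul {M : Matrix ι ι ℝ} (hM : CutBalanced M)
    (hnonneg : ∀ k l, 0 ≤ M k l) (hrow : ∀ k, ∑ l, M k l = 1) {γ : ℝ} (hγ : 0 ≤ γ)
    (hlb : ∀ k l, 0 < M k l → γ ≤ M k l) (hdiag : ∀ k, γ ≤ M k k) {c : ι → ℝ} (hc : 0 ≤ c)
    (hcI : ∀ J : Finset ι, J.Nonempty → γ ^ (Fintype.card ι - #J) ≤ ∑ j ∈ J, c j)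
    {I : Finset ι} (hI : I.Nonempty) :
    γ ^ (Fintype.card ι - #I) ≤ ∑ j ∈ I, (c ᵥ* M) j := by
  classical
  by_cases huniv : I = Finset.univ
  · subst huniv
    rw [sum_vecMul_of_closed hnonneg hrow c (by simp) (by simp)]
    exact hcI _ hI
  have hS : (I : Set ι) ≠ Set.univ := by rwa [Ne, ← Finset.coe_univ, Finset.coe_inj]
  by_cases hflow : ∃ i ∈ (I : Set ι), ∃ j ∉ (I : Set ι), 0 < M i j
  · obtain ⟨i, hi, j, hj, hji⟩ := (hM I (by simpa using hI) hS).1 hflow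
    have hcard : #I < Fintype.card ι := Finset.card_lt_univ_of_notMem (x := j) hj
    calc γ ^ (Fintype.card ι - #I) = γ * γ ^ (Fintype.card ι - #(insert j I)) := by
          rw [Finset.card_insert_of_notMem hj, ← pow_succ']
          congr 1; omega
      _ ≤ γ * ∑ k ∈ insert j I, c k :=
          mul_le_mul_of_nonneg_left (hcI _ (Finset.insert_nonempty j I)) hγ
      _ ≤ _ := mul_sum_insert_le_sum_vecMul hnonneg hlb hdiag hc hi hji
  · have hback : ¬ ∃ i ∈ (I : Set ι), ∃ j ∉ (I : Set ι), 0 < M j i :=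
      fun h => hflow ((hM I (by simpa using hI) hS).2 h)
    push Not at hflow hback
    rw [sum_vecMul_of_closed hnonneg hrow c hflow hback]
    exact hcI I hI

/-- The column sums `1ᵀ A (s-1) ⋯ A t` of a backward product. -/
def backwardMass (A : ℕ → Matrix ι ι ℝ) (s t : ℕ) : ι → ℝ :=
  if s ≤ t then 1 else backwardMass A s (t + 1) ᵥ* A t
termination_by s - t

section BackwardMass

variable {A : ℕ → Matrix ι ι ℝ} {s t : ℕ}

lemma backwardMass_of_le (h : s ≤ t) : backwardMass A s t = 1 := by
  rw [backwardMass, if_pos h]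

lemma backwardMass_of_lt (h : t < s) :
    backwardMass A s t = backwardMass A s (t + 1) ᵥ* A t := by
  rw [backwardMass, if_neg (not_le.2 h)]

lemma backwardMass_nonneg (hnonneg : ∀ t k l, 0 ≤ A t k l) (s t : ℕ) :
    0 ≤ backwardMass A s t := by
  rcases le_or_gt s t with h | h
  · rw [backwardMass_of_le h]; exact zero_le_one
  · rw [backwardMass_of_lt h]
    exact fun j => Finset.sum_nonneg fun k _ =>
      mul_nonneg (backwardMass_nonneg hnonneg s (t + 1) k) (hnonneg t k j)
termination_by s - t

lemma sum_backwardMass (hrow : ∀ t k, ∑ l, A t k l = 1) (s t : ℕ) :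
    ∑ j, backwardMass A s t j = Fintype.card ι := by
  rcases le_or_gt s t with h | h
  · simp [backwardMass_of_le h]
  · rw [backwardMass_of_lt h, sum_vecMul_eq]
    simp only [hrow, mul_one]
    exact sum_backwardMass hrow s (t + 1)
termination_by s - t

theorem pow_le_sum_backwardMass (hcb : ∀ t, CutBalanced (A t))
    (hnonneg : ∀ t k l, 0 ≤ A t k l) (hrow : ∀ t k, ∑ l, A t k l = 1) {γ : ℝ} (hγ : 0 ≤ γ)
    (hlb : ∀ t k l, 0 < A t k l → γ ≤ A t k l) (hdiag : ∀ t k, γ ≤ A t k k)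
    (s t : ℕ) {I : Finset ι} (hI : I.Nonempty) :
    γ ^ (Fintype.card ι - #I) ≤ ∑ j ∈ I, backwardMass A s t j := by
  rcases le_or_gt s t with h | h
  · obtain ⟨k, hk⟩ := hI
    have hγ1 : γ ≤ 1 := (hdiag 0 k).trans <| (hrow 0 k).symm ▸
      Finset.single_le_sum (fun l _ => hnonneg 0 k l) (Finset.mem_univ k)
    simp only [backwardMass_of_le h, Pi.one_apply, Finset.sum_const, nsmul_one]
    exact (pow_le_one₀ hγ hγ1).trans (Nat.one_le_cast.2 (Finset.card_pos.2 ⟨k, hk⟩))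
  · rw [backwardMass_of_lt h]
    exact (hcb t).pow_le_sum_vecMul (hnonneg t) (hrow t) hγ (hlb t) (hdiag t)
      (backwardMass_nonneg hnonneg s (t + 1))
      (fun J hJ => pow_le_sum_backwardMass hcb hnonneg hrow hγ hlb hdiag s (t + 1) hJ) hI
termination_by s - t

end BackwardMass

/-- An absolute probability sequence of `A`, bounded below by `p > 0` and normalised to total
mass `card ι` rather than `1`. -/
structure IsAbsoluteProbSeq (A : ℕ → Matrix ι ι ℝ) (π : ℕ → ι → ℝ) (p : ℝ) : Prop where
  pos : 0 < p
  le_apply : ∀ t j, p ≤ π t j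
  eq_vecMul : ∀ t, π t = π (t + 1) ᵥ* A t
  sum_eq : ∀ t, ∑ j, π t j = Fintype.card ι

theorem exists_isAbsoluteProbSeq_of_le_backwardMass {A : ℕ → Matrix ι ι ℝ}
    (hnonneg : ∀ t k l, 0 ≤ A t k l) (hrow : ∀ t k, ∑ l, A t k l = 1) {p : ℝ} (hp : 0 < p)
    (hlow : ∀ s t j, t ≤ s → p ≤ backwardMass A s t j) :
    ∃ π, IsAbsoluteProbSeq A π p := by
  obtain ⟨U, hU⟩ := Ultrafilter.exists_le (atTop : Filter ℕ)
  have hmem : ∀ s, backwardMass A s ∈ Set.univ.pi fun _ => Set.univ.pi fun _ =>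
      Set.Icc (0 : ℝ) (Fintype.card ι) := fun s t _ j _ =>
    ⟨backwardMass_nonneg hnonneg s t j, sum_backwardMass (A := A) hrow s t ▸
      Finset.single_le_sum (fun k _ => backwardMass_nonneg hnonneg s t k) (Finset.mem_univ j)⟩
  obtain ⟨π, -, hπ⟩ := (isCompact_univ_pi fun _ => isCompact_univ_pi fun _ => isCompact_Icc)
    |>.ultrafilter_le_nhds (U.map (backwardMass A))
      (Filter.le_principal_iff.2 (Filter.mem_map.2 (Filter.univ_mem' hmem)))
  have hlim : Tendsto (backwardMass A) U (𝓝 π) := by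
    rwa [Tendsto, ← Ultrafilter.coe_map]
  have hlimt : ∀ t, Tendsto (fun s => backwardMass A s t) U (𝓝 (π t)) :=
    tendsto_pi_nhds.1 hlim
  refine ⟨π, hp, fun t j => ?_, fun t => ?_, fun t => ?_⟩
  · exact ge_of_tendsto (tendsto_pi_nhds.1 (hlimt t) j)
      (hU (eventually_ge_atTop t |>.mono fun s hs => hlow s t j hs))
  · have hvecMul : Continuous fun v : ι → ℝ => v ᵥ* A t :=
      continuous_id.matrix_vecMul continuous_const
    refine tendsto_nhds_unique (hlimt t) ((hvecMul.tendsto _).comp (hlimt (t + 1)) |>.congr' ?_)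
    exact hU (eventually_gt_atTop t |>.mono fun s hs => (backwardMass_of_lt hs).symm)
  · refine tendsto_nhds_unique (tendsto_finsetSum _ fun j _ => tendsto_pi_nhds.1 (hlimt t) j) ?_
    simp only [sum_backwardMass hrow]
    exact tendsto_const_nhds

def weightedExcess (w y : ι → ℝ) (c : ℝ) : ℝ :=
  ∑ j, w j * (y j - c)⁺

section WeightedExcess

variable {w y : ι → ℝ} {u v : ℝ}

lemma le_weightedExcess_sub (hw : 0 ≤ w) (huv : u ≤ v) :
    (v - u) * ∑ j with v ≤ y j, w j ≤ weightedExcess w y u - weightedExcess w y v := by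
  rw [weightedExcess, weightedExcess, ← Finset.sum_sub_distrib, Finset.mul_sum]
  refine (Finset.sum_le_sum fun j hj => ?_).trans
    (Finset.sum_le_sum_of_subset_of_nonneg (Finset.filter_subset _ _) fun j _ _ => ?_)
  · have hvy : v ≤ y j := (Finset.mem_filter.1 hj).2
    rw [← mul_sub, posPart_eq_self.2 (by linarith), posPart_eq_self.2 (by linarith), mul_comm]
    exact le_of_eq (by ring)
  · rw [← mul_sub]
    exact mul_nonneg (hw j) (sub_nonneg.2 (posPart_mono (by linarith)))

lemma weightedExcess_sub_le (hw : 0 ≤ w) (huv : u ≤ v) :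
    weightedExcess w y u - weightedExcess w y v ≤ (v - u) * ∑ j with u < y j, w j := by
  rw [weightedExcess, weightedExcess, ← Finset.sum_sub_distrib, Finset.mul_sum,
    Finset.sum_filter]
  refine Finset.sum_le_sum fun j _ => ?_
  rw [← mul_sub]
  split_ifs with h
  · rw [mul_comm]
    refine mul_le_mul_of_nonneg_right ?_ (hw j)
    rw [posPart_eq_self.2 (by linarith)]
    linarith [le_posPart (y j - v)]
  · rw [posPart_eq_zero.2 (by linarith), posPart_eq_zero.2 (by linarith), sub_zero, mul_zero]

lemma weightedExcess_slope_mem_Icc (hw : 0 ≤ w) (huv : u < v) :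
    (weightedExcess w y u - weightedExcess w y v) / (v - u) ∈ Set.Icc 0 (∑ j, w j) := by
  have hvu : 0 < v - u := sub_pos.2 huv
  constructor
  · exact div_nonneg ((mul_nonneg hvu.le (Finset.sum_nonneg fun j _ => hw j)).trans
      (le_weightedExcess_sub hw huv.le)) hvu.le
  · rw [div_le_iff₀' hvu]
    exact (weightedExcess_sub_le hw huv.le).trans (mul_le_mul_of_nonneg_left
      (Finset.sum_le_sum_of_subset_of_nonneg (Finset.filter_subset _ _)
        fun j _ _ => hw j) hvu.le)

theorem weightedExcess_slope_add_le (hw : 0 ≤ w) {a b : ℝ} (hua : u < a)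
    (hab : a ≤ b) (hbv : b < v) {i : ι} (hi : y i ∈ Set.Icc a b) :
    (weightedExcess w y b - weightedExcess w y v) / (v - b) + w i ≤
      (weightedExcess w y u - weightedExcess w y a) / (a - u) := by
  classical
  have hmass : w i + ∑ j with b < y j, w j ≤ ∑ j with a ≤ y j, w j := by
    have hiout : i ∉ ({j | b < y j} : Finset ι) := by simp [hi.2]
    rw [← Finset.sum_insert hiout]
    refine Finset.sum_le_sum_of_subset_of_nonneg (fun j hj => ?_) fun j _ _ => hw j
    rcases Finset.mem_insert.1 hj with rfl | hj
    · simp [hi.1]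
    · simp only [Finset.mem_filter, Finset.mem_univ, true_and] at hj ⊢
      linarith
  have hright := weightedExcess_sub_le (y := y) hw hbv.le
  have hleft := le_weightedExcess_sub (y := y) hw hua.le
  rw [← div_le_iff₀' (sub_pos.2 hbv)] at hright
  rw [← le_div_iff₀' (sub_pos.2 hua)] at hleft
  linarith

end WeightedExcess

theorem frequently_jump_of_eventually_notMem_Icc {α : Type*} [LinearOrder α] {y : ℕ → α}
    {a b : α} (hab : a ≤ b) (hlow : ∃ᶠ t in atTop, y t < a) (hhigh : ∃ᶠ t in atTop, b < y t)
    (havoid : ∀ᶠ t in atTop, y t ∉ Set.Icc a b) :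
    ∃ᶠ t in atTop, b < y t ∧ y (t + 1) < a := by
  by_contra hno
  rw [not_frequently] at hno
  have hstay : ∀ᶠ t in atTop, b < y t → b < y (t + 1) := by
    filter_upwards [hno, (tendsto_add_atTop_nat 1).eventually havoid] with t hjump hout hbt
    simp only [Set.mem_Icc, not_and_or, not_le] at hout
    exact hout.resolve_left fun h => hjump ⟨hbt, h⟩
  obtain ⟨T, hT⟩ := eventually_atTop.1 hstay
  obtain ⟨t₀, ht₀T, ht₀⟩ := frequently_atTop.1 hhigh T
  have habove : ∀ t, t₀ ≤ t → b < y t := by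
    intro t ht
    induction t, ht using Nat.le_induction with
    | base => exact ht₀
    | succ t ht ih => exact hT t (ht₀T.trans ht) ih
  obtain ⟨t, ht, hlt⟩ := frequently_atTop.1 hlow t₀
  exact lt_asymm (hlt.trans_le hab) (habove t ht)

theorem exists_tendsto_of_not_oscillating {y : ℕ → ℝ} {R : ℝ} (hR : ∀ t, |y t| ≤ R)
    (hosc : ∀ s r, s < r → (∃ᶠ t in atTop, y t < s) → (∃ᶠ t in atTop, r < y t) → False) :
    ∃ L, Tendsto y atTop (𝓝 L) := by
  have hle : IsBoundedUnder (· ≤ ·) atTop y :=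
    isBoundedUnder_of ⟨R, fun t => (abs_le.1 (hR t)).2⟩
  have hge : IsBoundedUnder (· ≥ ·) atTop y :=
    isBoundedUnder_of ⟨-R, fun t => (abs_le.1 (hR t)).1⟩
  rcases (liminf_le_limsup hle hge).eq_or_lt with heq | hlt
  · exact ⟨_, tendsto_of_liminf_eq_limsup heq rfl hle hge⟩
  · obtain ⟨s, hs, hsr⟩ := exists_between hlt
    obtain ⟨r, hsr, hr⟩ := exists_between hsr
    exact (hosc s r hsr (frequently_lt_of_liminf_lt hle.isCoboundedUnder_ge hs)
      (frequently_lt_of_lt_limsup hge.isCoboundedUnder_le hr)).elim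

lemma natCast_mul_add_le_of_succ_add_le {f : ℕ → ℝ} {p : ℝ} {N : ℕ}
    (h : ∀ k < N, f (k + 1) + p ≤ f k) : N * p + f N ≤ f 0 := by
  induction N with
  | zero => simp
  | succ N ih =>
    have := h N (Nat.lt_succ_self N)
    have := ih fun k hk => h k (hk.trans (Nat.lt_succ_self N))
    push_cast
    linarith

section Dynamics

variable {A : ℕ → Matrix ι ι ℝ} {x : ℕ → ι → ℝ}

lemma abs_le_sum_abs_init (hnonneg : ∀ t k l, 0 ≤ A t k l) (hrow : ∀ t k, ∑ l, A t k l = 1)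
    (hx : ∀ t i, x (t + 1) i = ∑ j, A t i j * x t j) (t : ℕ) (i : ι) :
    |x t i| ≤ ∑ k, |x 0 k| := by
  induction t generalizing i with
  | zero => exact Finset.single_le_sum (fun k _ => abs_nonneg (x 0 k)) (Finset.mem_univ i)
  | succ t ih =>
    calc |x (t + 1) i| ≤ ∑ j, A t i j * |x t j| := by
          rw [hx]
          refine (Finset.abs_sum_le_sum_abs _ _).trans_eq (Finset.sum_congr rfl fun j _ => ?_)
          rw [abs_mul, abs_of_nonneg (hnonneg t i j)]
      _ ≤ ∑ j, A t i j * ∑ k, |x 0 k| :=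
          Finset.sum_le_sum fun j _ => mul_le_mul_of_nonneg_left (ih j) (hnonneg t i j)
      _ = ∑ k, |x 0 k| := by rw [← Finset.sum_mul, hrow, one_mul]

def jensenGap (A : ℕ → Matrix ι ι ℝ) (x : ℕ → ι → ℝ) (c : ℝ) (t : ℕ) (i : ι) : ℝ :=
  ∑ j, A t i j * (x t j - c)⁺ - (x (t + 1) i - c)⁺

lemma jensenGap_nonneg (hnonneg : ∀ t k l, 0 ≤ A t k l) (hrow : ∀ t k, ∑ l, A t k l = 1)
    (hx : ∀ t i, x (t + 1) i = ∑ j, A t i j * x t j) (c : ℝ) (t : ℕ) (i : ι) :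
    0 ≤ jensenGap A x c t i := by
  refine sub_nonneg.2 (max_le ?_ ?_)
  · calc x (t + 1) i - c = ∑ j, A t i j * (x t j - c) := by
          simp only [mul_sub, Finset.sum_sub_distrib, ← Finset.sum_mul, hrow, one_mul, hx]
      _ ≤ ∑ j, A t i j * (x t j - c)⁺ :=
          Finset.sum_le_sum fun j _ => mul_le_mul_of_nonneg_left (le_posPart _) (hnonneg t i j)
  · exact Finset.sum_nonneg fun j _ => mul_nonneg (hnonneg t i j) (posPart_nonneg _)

lemma mul_posPart_le_jensenGap (hnonneg : ∀ t k l, 0 ≤ A t k l) {c : ℝ} {t : ℕ} {i : ι}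
    (h : x (t + 1) i ≤ c) (j : ι) : A t i j * (x t j - c)⁺ ≤ jensenGap A x c t i := by
  rw [jensenGap, posPart_eq_zero.2 (sub_nonpos.2 h), sub_zero]
  exact Finset.single_le_sum (f := fun j => A t i j * (x t j - c)⁺)
    (fun j _ => mul_nonneg (hnonneg t i j) (posPart_nonneg _)) (Finset.mem_univ j)

lemma weightedExcess_sub_succ {π : ℕ → ι → ℝ} (hπ : ∀ t, π t = π (t + 1) ᵥ* A t)
    (c : ℝ) (t : ℕ) :
    weightedExcess (π t) (x t) c - weightedExcess (π (t + 1)) (x (t + 1)) c =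
      ∑ i, π (t + 1) i * jensenGap A x c t i := by
  have hsplit :
      weightedExcess (π t) (x t) c = ∑ i, π (t + 1) i * ∑ j, A t i j * (x t j - c)⁺ := by
    rw [weightedExcess, hπ t]
    simp only [Matrix.vecMul, dotProduct, Finset.sum_mul, Finset.mul_sum, mul_assoc]
    exact Finset.sum_comm
  rw [hsplit, weightedExcess, ← Finset.sum_sub_distrib]
  simp only [jensenGap, mul_sub]

end Dynamics

namespace IsAbsoluteProbSeq

variable {A : ℕ → Matrix ι ι ℝ} {x : ℕ → ι → ℝ} {π : ℕ → ι → ℝ} {p : ℝ}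

lemma nonneg (hπ : IsAbsoluteProbSeq A π p) (t : ℕ) : 0 ≤ π t :=
  fun j => hπ.pos.le.trans (hπ.le_apply t j)

variable {G : ℝ → ℝ}

theorem limit_slope_mem_Icc (hπ : IsAbsoluteProbSeq A π p)
    (hG : ∀ c, Tendsto (fun t => weightedExcess (π t) (x t) c) atTop (𝓝 (G c)))
    {u v : ℝ} (huv : u < v) : (G u - G v) / (v - u) ∈ Set.Icc 0 (Fintype.card ι : ℝ) :=
  isClosed_Icc.mem_of_tendsto (((hG u).sub (hG v)).div_const _) <| Eventually.of_forall
    fun t => hπ.sum_eq t ▸ weightedExcess_slope_mem_Icc (hπ.nonneg t) huv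

theorem limit_slope_add_le (hπ : IsAbsoluteProbSeq A π p)
    (hG : ∀ c, Tendsto (fun t => weightedExcess (π t) (x t) c) atTop (𝓝 (G c)))
    {u a b v : ℝ} (hua : u < a) (hab : a ≤ b) (hbv : b < v) {i : ι}
    (hband : ∃ᶠ t in atTop, x t i ∈ Set.Icc a b) :
    (G b - G v) / (v - b) + p ≤ (G u - G a) / (a - u) := by
  have hslope : ∀ c d, Tendsto (fun t => (weightedExcess (π t) (x t) c -
      weightedExcess (π t) (x t) d) / (d - c)) atTop (𝓝 ((G c - G d) / (d - c))) :=
    fun c d => ((hG c).sub (hG d)).div_const _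
  have := le_of_tendsto_of_frequently (((hslope b v).add_const p).sub (hslope u a)) <|
    hband.mono fun t ht => sub_nonpos.2 <| by
      linarith [hπ.le_apply t i, weightedExcess_slope_add_le (hπ.nonneg t) hua hab hbv ht]
  linarith

section

variable (hπ : IsAbsoluteProbSeq A π p) (hnonneg : ∀ t k l, 0 ≤ A t k l)
  (hrow : ∀ t k, ∑ l, A t k l = 1) (hx : ∀ t i, x (t + 1) i = ∑ j, A t i j * x t j)
include hπ hnonneg hrow hx

theorem exists_tendsto_weightedExcess (c : ℝ) :
    ∃ L, Tendsto (fun t => weightedExcess (π t) (x t) c) atTop (𝓝 L) := by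
  refine ⟨_, tendsto_atTop_ciInf (antitone_nat_of_succ_le fun t => ?_) ⟨0, ?_⟩⟩
  · have hdrop := weightedExcess_sub_succ (x := x) hπ.eq_vecMul c t
    have hgap : 0 ≤ ∑ i, π (t + 1) i * jensenGap A x c t i := Finset.sum_nonneg fun i _ =>
      mul_nonneg (hπ.nonneg _ i) (jensenGap_nonneg hnonneg hrow hx c t i)
    linarith
  · rintro _ ⟨t, rfl⟩
    exact Finset.sum_nonneg fun j _ => mul_nonneg (hπ.nonneg t j) (posPart_nonneg _)

theorem tendsto_jensenGap (c : ℝ) (i : ι) :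
    Tendsto (fun t => jensenGap A x c t i) atTop (𝓝 0) := by
  obtain ⟨L, hL⟩ := hπ.exists_tendsto_weightedExcess hnonneg hrow hx c
  have hdrop : Tendsto (fun t => (weightedExcess (π t) (x t) c -
      weightedExcess (π (t + 1)) (x (t + 1)) c) / p) atTop (𝓝 0) := by
    simpa using (hL.sub (hL.comp (tendsto_add_atTop_nat 1))).div_const p
  have hgap := jensenGap_nonneg hnonneg hrow hx c
  refine squeeze_zero (fun t => hgap t i) (fun t => ?_) hdrop
  rw [le_div_iff₀ hπ.pos, weightedExcess_sub_succ hπ.eq_vecMul, mul_comm]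
  calc p * jensenGap A x c t i ≤ π (t + 1) i * jensenGap A x c t i :=
        mul_le_mul_of_nonneg_right (hπ.le_apply _ i) (hgap t i)
    _ ≤ ∑ k, π (t + 1) k * jensenGap A x c t k :=
        Finset.single_le_sum (fun k _ => mul_nonneg (hπ.nonneg _ k) (hgap t k))
          (Finset.mem_univ i)

theorem frequently_mem_Icc {β : ℝ} (hβ : 0 < β) (hdiag : ∀ t i, β ≤ A t i i) {i : ι}
    {a b : ℝ} (hab : a < b) (hlow : ∃ᶠ t in atTop, x t i < a)
    (hhigh : ∃ᶠ t in atTop, b < x t i) : ∃ᶠ t in atTop, x t i ∈ Set.Icc a b := by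
  by_contra hno
  have hjump := frequently_jump_of_eventually_notMem_Icc hab.le hlow hhigh
    (not_frequently.1 hno)
  have hsmall := (hπ.tendsto_jensenGap hnonneg hrow hx a i).eventually_lt_const
    (mul_pos hβ (sub_pos.2 hab))
  obtain ⟨t, ⟨hbt, hta⟩, hgap⟩ := (hjump.and_eventually hsmall).exists
  have : β * (b - a) ≤ jensenGap A x a t i :=
    calc β * (b - a) ≤ A t i i * (x t i - a)⁺ := by
          refine mul_le_mul (hdiag t i) ?_ (sub_pos.2 hab).le (hnonneg t i i)
          rw [posPart_eq_self.2 (by linarith)]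
          linarith
      _ ≤ jensenGap A x a t i := mul_posPart_le_jensenGap hnonneg hta.le i
  linarith

theorem limit_le_of_frequently_pos {α : ℝ} (hα : 0 < α)
    (hlb : ∀ t k l, 0 < A t k l → α ≤ A t k l) {a b : ι}
    (hfreq : ∃ᶠ t in atTop, 0 < A t b a) {La Lb : ℝ}
    (ha : Tendsto (fun t => x t a) atTop (𝓝 La)) (hb : Tendsto (fun t => x t b) atTop (𝓝 Lb)) :
    La ≤ Lb := by
  by_contra! hlt
  set c := (La + Lb) / 2
  set δ := (La - Lb) / 4
  have hδ : 0 < δ := by simp only [δ]; linarith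
  have hhigh := ha.eventually_const_lt (show c + δ < La by simp only [c, δ]; linarith)
  have hlow := (hb.comp (tendsto_add_atTop_nat 1)).eventually_lt_const
    (show Lb < c by simp only [c]; linarith)
  have hsmall := (hπ.tendsto_jensenGap hnonneg hrow hx c b).eventually_lt_const (mul_pos hα hδ)
  obtain ⟨t, hpos, hxa, hxb, hgap⟩ :=
    (hfreq.and_eventually (hhigh.and (hlow.and hsmall))).exists
  have : α * δ ≤ jensenGap A x c t b :=
    calc α * δ ≤ A t b a * (x t a - c)⁺ := by
          refine mul_le_mul (hlb t b a hpos) ?_ hδ.le (hnonneg t b a)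
          rw [posPart_eq_self.2 (by linarith)]
          linarith
      _ ≤ jensenGap A x c t b := mul_posPart_le_jensenGap hnonneg hxb.le a
  linarith

/-- Each of the `N > card ι / p` bands `[c (2k+1), c (2k+2)]` is visited infinitely often, so
the limiting slope `f k` just below the `k`-th band drops by `p` per band while staying in
`[0, card ι]`. -/
theorem not_oscillating {β : ℝ} (hβ : 0 < β) (hdiag : ∀ t i, β ≤ A t i i)
    {i : ι} {s r : ℝ} (hsr : s < r) (hlow : ∃ᶠ t in atTop, x t i < s)
    (hhigh : ∃ᶠ t in atTop, r < x t i) : False := by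
  choose G hG using hπ.exists_tendsto_weightedExcess hnonneg hrow hx
  obtain ⟨N, hN⟩ := exists_nat_gt ((Fintype.card ι : ℝ) / p)
  have hNpos : (0 : ℝ) < N := (div_nonneg (Nat.cast_nonneg _) hπ.pos.le).trans_lt hN
  set δ := (r - s) / (2 * N)
  have hδ : 0 < δ := div_pos (sub_pos.2 hsr) (by positivity)
  set c : ℕ → ℝ := fun m => s + m * δ
  have hc : StrictMono c := strictMono_nat_of_lt_succ fun m => by
    simp only [c]; push_cast; linarith
  have hs_le : ∀ m, s ≤ c m := fun m => le_add_of_nonneg_right (by positivity)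
  have hle_r : ∀ m ≤ 2 * N, c m ≤ r := fun m hm => by
    have : (m : ℝ) * δ ≤ 2 * N * δ := mul_le_mul_of_nonneg_right (by exact_mod_cast hm) hδ.le
    have : 2 * N * δ = r - s := by simp only [δ]; field_simp
    simp only [c]; linarith
  set f : ℕ → ℝ := fun k => (G (c (2 * k)) - G (c (2 * k + 1))) / (c (2 * k + 1) - c (2 * k))
  have hstep : ∀ k < N, f (k + 1) + p ≤ f k := by
    intro k hk
    have hband := hπ.frequently_mem_Icc hnonneg hrow hx hβ hdiag
      (a := c (2 * k + 1)) (b := c (2 * k + 2)) (hc (by omega))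
      (hlow.mono fun t ht => ht.trans_le (hs_le _))
      (hhigh.mono fun t ht => (hle_r _ (by omega)).trans_lt ht)
    have := hπ.limit_slope_add_le hG (u := c (2 * k)) (v := c (2 * k + 3))
      (hc (by omega)) (hc (by omega)).le (hc (by omega)) hband
    simpa only [f, show 2 * (k + 1) = 2 * k + 2 by ring, show 2 * (k + 1) + 1 = 2 * k + 3 by ring]
      using this
  have hf0 := (hπ.limit_slope_mem_Icc hG (hc zero_lt_one)).2
  have hfN := (hπ.limit_slope_mem_Icc hG (hc (Nat.lt_succ_self (2 * N)))).1
  have := natCast_mul_add_le_of_succ_add_le hstep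
  rw [div_lt_iff₀ hπ.pos] at hN
  simp only [f] at this
  linarith

theorem exists_tendsto {β : ℝ} (hβ : 0 < β) (hdiag : ∀ t i, β ≤ A t i i)
    (i : ι) : ∃ L, Tendsto (fun t => x t i) atTop (𝓝 L) :=
  exists_tendsto_of_not_oscillating (abs_le_sum_abs_init hnonneg hrow hx · i)
    fun _ _ hsr hlow hhigh => hπ.not_oscillating hnonneg hrow hx hβ hdiag hsr hlow hhigh

theorem limit_eq_of_frequently_pos {α : ℝ} (hα : 0 < α)
    (hlb : ∀ t k l, 0 < A t k l → α ≤ A t k l) {a b : ι}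
    (hfreq : ∃ᶠ t in atTop, 0 < A t b a) {La Lb : ℝ}
    (ha : Tendsto (fun t => x t a) atTop (𝓝 La)) (hb : Tendsto (fun t => x t b) atTop (𝓝 Lb)) :
    La = Lb := by
  have hx' : ∀ t i, (-x) (t + 1) i = ∑ j, A t i j * (-x) t j := fun t i => by
    simp only [Pi.neg_apply, hx, mul_neg, Finset.sum_neg_distrib]
  exact le_antisymm (hπ.limit_le_of_frequently_pos hnonneg hrow hx hα hlb hfreq ha hb)
    (neg_le_neg_iff.1 (hπ.limit_le_of_frequently_pos hnonneg hrow hx' hα hlb hfreq ha.neg hb.neg))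

end

end IsAbsoluteProbSeq

theorem exists_isAbsoluteProbSeq {A : ℕ → Matrix ι ι ℝ}
    (hcb : ∀ t, CutBalanced (A t)) (hnonneg : ∀ t k l, 0 ≤ A t k l)
    (hrow : ∀ t k, ∑ l, A t k l = 1) {γ : ℝ} (hγ : 0 < γ)
    (hlb : ∀ t k l, 0 < A t k l → γ ≤ A t k l) (hdiag : ∀ t k, γ ≤ A t k k) :
    ∃ π, IsAbsoluteProbSeq A π (γ ^ (Fintype.card ι - 1)) := by
  classical
  exact exists_isAbsoluteProbSeq_of_le_backwardMass hnonneg hrow (pow_pos hγ _) fun s t j _ => by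
    simpa using pow_le_sum_backwardMass hcb hnonneg hrow hγ.le hlb hdiag s t
      (Finset.singleton_nonempty j)

open Filter in
/-- For cut-balanced averaging dynamics, agents in the same strongly connected
component of the unbounded-interaction digraph reach the same limit. -/
theorem cut_balanced_same_scc_same_limit (n : ℕ)
    (A : ℕ → Matrix (Fin n) (Fin n) ℝ)
    (hnonneg : ∀ t i j, 0 ≤ A t i j)
    (hrow : ∀ t i, ∑ j, A t i j = 1)
    (α : ℝ) (hα : 0 < α) (hlb : ∀ t i j, 0 < A t i j → α ≤ A t i j)
    (β : ℝ) (hβ : 0 < β) (hdiag : ∀ t i, β ≤ A t i i)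
    (hcb : ∀ t, ∀ S : Set (Fin n), S.Nonempty → S ≠ Set.univ →
      ((∃ i ∈ S, ∃ j ∉ S, 0 < A t i j) ↔ (∃ i ∈ S, ∃ j ∉ S, 0 < A t j i)))
    (x : ℕ → Fin n → ℝ)
    (hx : ∀ t i, x (t+1) i = ∑ j, A t i j * x t j)
    -- the digraph with edge (j,i) iff `A t i j > 0` infinitely often
    (E : Fin n → Fin n → Prop)
    (hE : ∀ i j, E j i ↔ {t | 0 < A t i j}.Infinite)
    (i j : Fin n)
    (hscc : Relation.ReflTransGen E i j ∧ Relation.ReflTransGen E j i) :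
    ∃ L : ℝ, Tendsto (fun t => x t i) atTop (nhds L) ∧
      Tendsto (fun t => x t j) atTop (nhds L) := by
  obtain ⟨π, hπ⟩ := exists_isAbsoluteProbSeq hcb hnonneg hrow (lt_min hα hβ)
    (fun t k l h => (min_le_left α β).trans (hlb t k l h))
    (fun t k => (min_le_right α β).trans (hdiag t k))
  choose L hL using hπ.exists_tendsto hnonneg hrow hx hβ hdiag
  have hedge : ∀ a b, E a b → L a = L b := fun a b hab =>
    hπ.limit_eq_of_frequently_pos hnonneg hrow hx hα hlb
      (Nat.frequently_atTop_iff_infinite.2 ((hE b a).1 hab)) (hL a) (hL b)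
  have hpath : L i = L j := by
    obtain ⟨hij, -⟩ := hscc
    induction hij with
    | refl => rfl
    | tail _ hbc ih => exact ih.trans (hedge _ _ hbc)
  exact ⟨L i, hL i, hpath ▸ hL j⟩
end
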